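/- arXiv:2602.23998 — 2 statements merged into one kernel-verified Lean document; each statement's English description precedes it below -/
import Mathlib

section
/- Let G be a finite group acting generically freely on a smooth G-variety X in divisorial form. Then for every component F of a fixed-point locus X^H (H ⊆ G a subgroup), the generic stabilizer group I(F) is contained in the center of the component stabilizer group D(F). -/
/-!
STATEMENT 3: (Divisorial form implies central generic stabilizers.)
Abstract algebraic form: let `D` be the component stabilizer `D(F)` of a stratum `F`,
acting by automorphisms `ρ` on the function field `L = k(F)` fixing the algebraically
closed base field `k`, and let `H ⊴ D` be the (abelian) generic stabilizer `I(F)`,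
acting trivially on `L`.  The divisoriality hypothesis says that every character
`χ : H → k^×` is the restriction of a 1-cocycle of `D` with values in `L^×`
(surjectivity of `Pic(X,G) → H¹(D, k(F)^×) → H¹(H, k(F)^×)^Y → H^∨`).
Conclusion: `H` is contained in the center of `D`.
-/

namespace Stmt3

/-- 1-cocycle condition for `f : D → L^×` with respect to the action `ρ` of `D` on `L`. -/
def IsCocycle {L : Type} [Field L] {D : Type} [Group D] (ρ : D →* RingAut L)
    (f : D → Lˣ) : Prop :=
  ∀ g h : D, (f (g * h) : L) = (f g : L) * ρ g (f h : L)

/-!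
Evaluating a cocycle `f` at `d * h = (d * h * d⁻¹) * d` in two ways shows that
`f (d * h * d⁻¹) = ρ d (f h)` whenever `ρ` is trivial on `d * h * d⁻¹`. If `f` restricts to a
character `χ` of `H` with values in `k`, which `ρ d` fixes, then `χ (d * h * d⁻¹) = χ h`.
As every character of `H` extends to a cocycle and the characters of the finite abelian
group `H` into `kˣ` separate points, `d * h * d⁻¹ = h`.
-/

theorem CommGroup.eq_of_forall_monoidHom_units_eq (k : Type*) [Field k] [IsAlgClosed k]
    [CharZero k] {A : Type*} [CommGroup A] [Finite A] {a b : A}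
    (h : ∀ χ : A →* kˣ, χ a = χ b) : a = b :=
  have : NeZero (Monoid.exponent A : k) := ⟨Nat.cast_ne_zero.mpr Monoid.exponent_ne_zero_of_finite⟩
  (CommGroup.forall_apply_eq_apply_iff A).mp h

namespace IsCocycle

variable {L : Type} [Field L] {D : Type} [Group D] {ρ : D →* RingAut L} {f : D → Lˣ}

theorem apply_mul_of_eq_one (hf : IsCocycle ρ f) {g : D} (hg : ρ g = 1) (d : D) :
    (f (g * d) : L) = f g * f d := by
  rw [hf, hg, RingAut.one_apply]

theorem apply_conj (hf : IsCocycle ρ f) (d g : D) (hg : ρ (d * g * d⁻¹) = 1) :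
    (f (d * g * d⁻¹) : L) = ρ d (f g) := by
  have hmul : (f (d * g * d⁻¹) : L) * f d = f d * ρ d (f g) := by
    rw [← hf.apply_mul_of_eq_one hg, inv_mul_cancel_right, hf]
  rw [mul_comm (f d : L)] at hmul
  exact mul_right_cancel₀ (f d).ne_zero hmul

end IsCocycle

theorem divisorial_implies_central
    (k L : Type) [Field k] [IsAlgClosed k] [CharZero k] [Field L] [Algebra k L]
    (D : Type) [Group D] [Finite D]
    (ρ : D →* RingAut L)
    (hfix : ∀ (d : D) (a : k), ρ d (algebraMap k L a) = algebraMap k L a)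
    (H : Subgroup D) [H.Normal]
    (habel : ∀ x y : H, x * y = y * x)
    (htriv : ∀ h ∈ H, ρ h = 1)
    (hsurj : ∀ χ : H →* kˣ, ∃ f : D → Lˣ, IsCocycle ρ f ∧
      ∀ h : H, (f (h : D) : L) = algebraMap k L (χ h : k)) :
    H ≤ Subgroup.center D := by
  intro h hh
  refine Subgroup.mem_center_iff.mpr fun d => ?_
  have hconj : d * h * d⁻¹ ∈ H := Subgroup.Normal.conj_mem ‹_› h hh d
  have hchar : ∀ χ : H →* kˣ, χ ⟨d * h * d⁻¹, hconj⟩ = χ ⟨h, hh⟩ := by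
    intro χ
    obtain ⟨f, hf, hres⟩ := hsurj χ
    have hval := hf.apply_conj d h (htriv _ hconj)
    rw [hres ⟨_, hconj⟩, hres ⟨h, hh⟩, hfix] at hval
    exact Units.ext ((algebraMap k L).injective hval)
  let : CommGroup H := { mul_comm := habel }
  have hcomm : d * h * d⁻¹ = h :=
    congrArg Subtype.val (CommGroup.eq_of_forall_monoidHom_units_eq k hchar)
  exact mul_inv_eq_iff_eq_mul.mp hcomm

end Stmt3
end

section
/- Let A be a finite abelian group, k an algebraically closed field of characteristic 0, and A^∨ = Hom(A, k^×). In the free abelian group on unordered pairs {b₁,b₂} of characters generating A^∨, modulo the relations (V): symbols containing 0 are 0, and (B): (b₁,b₂) = (b₁−b₂, b₂) + (b₁, b₂−b₁) for b₁≠b₂ and (b,b) = (0,b) = 0, every pair (b₁,b₂) with b₁ + b₂ = 0 has class 0. -/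
/-!
STATEMENT 18 (concrete case n = 2): Let `A` be (the character group of) a finite abelian
group.  Define `B₂(A)` as the quotient of the free abelian group on unordered pairs
`(b₁, b₂)` of elements generating `A`, modulo the relations
(O) `(b₁,b₂) = (b₂,b₁)`,
(V) `(b₁,b₂) = 0` if `b₁ = 0` or `b₂ = 0`,
(B) `(b₁,b₂) = (b₁−b₂, b₂) + (b₁, b₂−b₁)` for `b₁ ≠ b₂`, and `(b,b) = 0`.
Then every pair with `b₂ = −b₁` has class `0` in `B₂(A)`.
-/

namespace Stmt18

variable (A : Type) [AddCommGroup A]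

/-- Admissible symbols: pairs of elements of `A` generating `A`. -/
def Symb : Type := {p : A × A // AddSubgroup.closure {p.1, p.2} = ⊤}

/-- The relations defining `B₂(A)`. -/
def rels : Set (FreeAbelianGroup (Symb A)) :=
  -- (O): unordered pairs
  {x | ∃ p q : Symb A, p.1.1 = q.1.2 ∧ p.1.2 = q.1.1 ∧
        x = FreeAbelianGroup.of p - FreeAbelianGroup.of q} ∪
  -- (V): symbols containing 0 vanish
  {x | ∃ p : Symb A, (p.1.1 = 0 ∨ p.1.2 = 0) ∧ x = FreeAbelianGroup.of p} ∪
  -- (B): blow-up relation, b₁ ≠ b₂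
  {x | ∃ p q r : Symb A, p.1.1 ≠ p.1.2 ∧ q.1 = (p.1.1 - p.1.2, p.1.2) ∧
        r.1 = (p.1.1, p.1.2 - p.1.1) ∧
        x = FreeAbelianGroup.of p - FreeAbelianGroup.of q - FreeAbelianGroup.of r} ∪
  -- (B): b₁ = b₂ case, (b,b) = (0,b) = 0
  {x | ∃ p : Symb A, p.1.1 = p.1.2 ∧ x = FreeAbelianGroup.of p}

/-- The symbol group `B₂(A)`. -/
def B2 : Type := FreeAbelianGroup (Symb A) ⧸ AddSubgroup.closure (rels A)

instance : AddCommGroup (B2 A) :=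
  inferInstanceAs (AddCommGroup (FreeAbelianGroup (Symb A) ⧸ AddSubgroup.closure (rels A)))

/-- The class of a symbol in `B₂(A)`. -/
def symbolClass (p : Symb A) : B2 A :=
  QuotientAddGroup.mk' (AddSubgroup.closure (rels A)) (FreeAbelianGroup.of p)

/-- Any symbol `(b, −b)` vanishes in `B₂(A)`. -/
theorem symbol_b_neg_b_eq_zero [Finite A] (b : A)
    (hb : AddSubgroup.closure ({b, -b} : Set A) = ⊤) :
    symbolClass A ⟨(b, -b), hb⟩ = 0 := by
  show (QuotientAddGroup.mk' (AddSubgroup.closure (rels A)) (FreeAbelianGroup.of _) :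
      FreeAbelianGroup (Symb A) ⧸ AddSubgroup.closure (rels A)) = 0
  rw [QuotientAddGroup.mk'_apply, QuotientAddGroup.eq_zero_iff]
  by_cases h0 : b = 0
  · -- symbol (0, 0): use (V)
    apply AddSubgroup.subset_closure
    left; left; right
    exact ⟨⟨(b, -b), hb⟩, Or.inl h0, rfl⟩
  · -- b ≠ 0
    have hbtop : AddSubgroup.closure ({b} : Set A) = ⊤ := by
      rw [eq_top_iff, ← hb]
      rw [AddSubgroup.closure_le]
      rintro x (rfl | rfl)
      · exact AddSubgroup.subset_closure rfl
      · exact neg_mem (AddSubgroup.subset_closure rfl)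
    have h1 : AddSubgroup.closure ({(0 : A), b} : Set A) = ⊤ := by
      rw [eq_top_iff, ← hbtop]
      exact AddSubgroup.closure_mono (by intro x hx; right; exact hx)
    have h2 : AddSubgroup.closure ({-b, b} : Set A) = ⊤ := by
      rw [eq_top_iff, ← hbtop]
      exact AddSubgroup.closure_mono (by intro x hx; right; exact hx)
    set P : Symb A := ⟨((0 : A), b), h1⟩ with hP
    set Q : Symb A := ⟨(-b, b), h2⟩ with hQ
    -- (B) relation on P = (0, b): of P - of Q - of P ∈ rels
    have hrelB : FreeAbelianGroup.of P - FreeAbelianGroup.of Q - FreeAbelianGroup.of P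
        ∈ AddSubgroup.closure (rels A) := by
      apply AddSubgroup.subset_closure
      left; right
      refine ⟨P, Q, P, ?_, ?_, ?_, rfl⟩
      · exact fun h => h0 h.symm
      · simp [hP, hQ]
      · simp [hP]
    -- (V): of P ∈ rels
    have hP0 : FreeAbelianGroup.of P ∈ AddSubgroup.closure (rels A) := by
      apply AddSubgroup.subset_closure
      left; left; right
      exact ⟨P, Or.inl rfl, rfl⟩
    -- hence of Q ∈ closure
    have hQ0 : FreeAbelianGroup.of Q ∈ AddSubgroup.closure (rels A) := by
      have := sub_mem (sub_mem hP0 hrelB) hP0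
      simpa using this
    -- (O): of (b,-b) - of Q ∈ rels
    have hrelO : (FreeAbelianGroup.of (⟨(b, -b), hb⟩ : Symb A) : FreeAbelianGroup (Symb A)) - FreeAbelianGroup.of Q
        ∈ AddSubgroup.closure (rels A) := by
      apply AddSubgroup.subset_closure
      left; left; left
      exact ⟨⟨(b, -b), hb⟩, Q, rfl, rfl, rfl⟩
    have := add_mem hrelO hQ0
    simpa using this

end Stmt18
end
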